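/- Let d ≥ 1, W : ℝ → ℝ a continuous path, ℒ the Fourier multiplier of assumption (A1), s ∈ ℝ and ν > 0. There is a constant C such that for every bounded interval I = [a,b), every f ∈ L¹(I;H^s(𝕋^d)), and every u : I → H^s(𝕋^d) satisfying the Duhamel relation u(t) = e^{−(W_t−W_a)ℒ}u(a) + ∫_a^t e^{−(W_t−W_τ)ℒ}f(τ) dτ for all t ∈ I (i.e. u solves ∂_t u + (dW_t/dt)ℒu = f), one has ‖u‖_{F^{s,ν}(I)} ≤ C( ‖u‖_{E^s(I)} + ‖f‖_{N^{s,ν}(I)} ). -/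

import Mathlib

open scoped ENNReal
open MeasureTheory

attribute [local instance] Classical.propDecidable

namespace Modulated

/-- Frequency lattice `ℤ^d`. -/
abbrev Freq (d : ℕ) := Fin d → ℤ

/-- A distribution on `𝕋^d`, encoded by its sequence of Fourier coefficients. -/
abbrev FC (d : ℕ) := Freq d → ℂ

variable {d : ℕ}

/-- Japanese bracket `⟨k⟩ = (1+|k|²)^{1/2}`. -/
noncomputable def jb (k : Freq d) : ℝ := Real.sqrt (1 + ∑ i, ((k i : ℝ)) ^ 2)

/-- Euclidean norm `|k|` of a frequency. -/
noncomputable def freqNorm (k : Freq d) : ℝ := Real.sqrt (∑ i, ((k i : ℝ)) ^ 2)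

/-- The `H^s(𝕋^d)` norm (as an extended real), through Fourier coefficients. -/
noncomputable def HsNorm (s : ℝ) (u : FC d) : ℝ≥0∞ :=
  (∑' k : Freq d, ENNReal.ofReal (jb k ^ (2 * s) * ‖u k‖ ^ 2)) ^ (1/2 : ℝ)

/-- The `L²(𝕋^d)` norm. -/
noncomputable def L2Norm (u : FC d) : ℝ≥0∞ := HsNorm 0 u

/-- Littlewood-Paley projector `P_N`, `N = 2^n`, selecting `N/2 < |k| ≤ N`
(for `n = 0` this selects `1/2 < |k| ≤ 1`, consistently with the convention
`P_{≤ 1/2} u = û₀`). -/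
noncomputable def PN (n : ℕ) (u : FC d) : FC d :=
  fun k => if freqNorm k ≤ (2:ℝ) ^ n ∧ ¬ freqNorm k ≤ (2:ℝ) ^ n / 2 then u k else 0

/-- The propagator `e^{τℒ}`, `ℒ` the Fourier multiplier with symbol `i φ(k)`. -/
noncomputable def expL (φ : (Fin d → ℝ) → ℝ) (τ : ℝ) (u : FC d) : FC d :=
  fun k => Complex.exp (Complex.I * (τ : ℂ) * (φ (fun i => (k i : ℝ)) : ℂ)) * u k

/-- `V^p([a,b)) H^s` norm (with the convention `u(b) := 0`). -/
noncomputable def VpNorm (s p a b : ℝ) (u : ℝ → FC d) : ℝ≥0∞ :=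
  ⨆ (K : ℕ) (t : Fin (K+1) → ℝ) (_ : Monotone t) (_ : t 0 = a) (_ : t (Fin.last K) = b),
    (∑ k : Fin K,
      (HsNorm s fun j =>
        (if t k.succ = b then 0 else u (t k.succ) j) -
          (if t k.castSucc = b then 0 else u (t k.castSucc) j)) ^ p) ^ (1/p)

/-- `U^p([a,b)) H^s` atom. -/
def IsAtom (s p a b : ℝ) (A : ℝ → FC d) : Prop :=
  ∃ (K : ℕ) (t : Fin (K+1) → ℝ) (ψ : Fin K → FC d),
    Monotone t ∧ t 0 = a ∧ t (Fin.last K) = b ∧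
    (∑ k : Fin K, (HsNorm s (ψ k)) ^ p) ≤ 1 ∧
    ∀ x j, A x j = ∑ k : Fin K, if t k.castSucc ≤ x ∧ x < t k.succ then ψ k j else 0

/-- `U^p([a,b)) H^s` (atomic) norm. -/
noncomputable def UpNorm (s p a b : ℝ) (u : ℝ → FC d) : ℝ≥0∞ :=
  ⨅ (c : ℕ → ℂ) (A : ℕ → ℝ → FC d)
    (_ : Summable fun n => ‖c n‖) (_ : ∀ n, IsAtom s p a b (A n))
    (_ : ∀ t ∈ Set.Ico a b, ∀ j, HasSum (fun n => c n * A n t j) (u t j)),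
    ENNReal.ofReal (∑' n, ‖c n‖)

/-- Adapted norm `‖u‖_{U^p_{Wℒ}([a,b)) H^s} = ‖e^{W_t ℒ} u‖_{U^p H^s}`. -/
noncomputable def UpWNorm (s p : ℝ) (φ : (Fin d → ℝ) → ℝ) (W : ℝ → ℝ) (a b : ℝ)
    (u : ℝ → FC d) : ℝ≥0∞ :=
  UpNorm s p a b fun t => expL φ (W t) (u t)

/-- Adapted norm `‖u‖_{V^p_{Wℒ}([a,b)) H^s} = ‖e^{W_t ℒ} u‖_{V^p H^s}`. -/
noncomputable def VpWNorm (s p : ℝ) (φ : (Fin d → ℝ) → ℝ) (W : ℝ → ℝ) (a b : ℝ)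
    (u : ℝ → FC d) : ℝ≥0∞ :=
  VpNorm s p a b fun t => expL φ (W t) (u t)

/-- The solution space norm `‖u‖_{X^s([a,b))}`. -/
noncomputable def XNorm (s : ℝ) (φ : (Fin d → ℝ) → ℝ) (W : ℝ → ℝ) (a b : ℝ)
    (u : ℝ → FC d) : ℝ≥0∞ :=
  (∑' n : ℕ, (2:ℝ≥0∞) ^ (2 * s * (n:ℝ)) *
    (UpWNorm 0 2 φ W a b fun t => PN n (u t)) ^ (2:ℝ)) ^ (1/2:ℝ)

/-- The norm `‖u‖_{Y^s([a,b))}`. -/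
noncomputable def YNorm (s : ℝ) (φ : (Fin d → ℝ) → ℝ) (W : ℝ → ℝ) (a b : ℝ)
    (u : ℝ → FC d) : ℝ≥0∞ :=
  (∑' n : ℕ, (2:ℝ≥0∞) ^ (2 * s * (n:ℝ)) *
    (VpWNorm 0 2 φ W a b fun t => PN n (u t)) ^ (2:ℝ)) ^ (1/2:ℝ)

/-- Short-time norm `‖u‖_{F^{s,ν}([a,b))}`. -/
noncomputable def FNorm (s ν : ℝ) (φ : (Fin d → ℝ) → ℝ) (W : ℝ → ℝ) (a b : ℝ)
    (u : ℝ → FC d) : ℝ≥0∞ :=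
  (∑' n : ℕ, (2:ℝ≥0∞) ^ (2 * s * (n:ℝ)) *
    (⨆ (c : ℝ) (_ : a ≤ c) (_ : c + min (((2:ℝ) ^ n) ^ (-ν)) (b - a) ≤ b),
      UpWNorm 0 2 φ W c (c + min (((2:ℝ) ^ n) ^ (-ν)) (b - a))
        fun t => PN n (u t)) ^ (2:ℝ)) ^ (1/2:ℝ)

/-- Adapted `DU²` norm: the `U²` norm of the modulated primitive of `f`. -/
noncomputable def DUWNorm (φ : (Fin d → ℝ) → ℝ) (W : ℝ → ℝ) (a b : ℝ)
    (f : ℝ → FC d) : ℝ≥0∞ :=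
  UpNorm 0 2 a b fun t j => ∫ τ in a..t, expL φ (W τ) (f τ) j

/-- Short-time norm `‖f‖_{N^{s,ν}([a,b))}`. -/
noncomputable def NNorm (s ν : ℝ) (φ : (Fin d → ℝ) → ℝ) (W : ℝ → ℝ) (a b : ℝ)
    (f : ℝ → FC d) : ℝ≥0∞ :=
  (∑' n : ℕ, (2:ℝ≥0∞) ^ (2 * s * (n:ℝ)) *
    (⨆ (c : ℝ) (_ : a ≤ c) (_ : c + min (((2:ℝ) ^ n) ^ (-ν)) (b - a) ≤ b),
      DUWNorm φ W c (c + min (((2:ℝ) ^ n) ^ (-ν)) (b - a))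
        fun t => PN n (f t)) ^ (2:ℝ)) ^ (1/2:ℝ)

/-- Energy norm `‖u‖_{E^s([a,b))}`. -/
noncomputable def ENorm (s : ℝ) (a b : ℝ) (u : ℝ → FC d) : ℝ≥0∞ :=
  (∑' n : ℕ, (2:ℝ≥0∞) ^ (2 * s * (n:ℝ)) *
    (⨆ t ∈ Set.Ico a b, L2Norm (PN n (u t))) ^ (2:ℝ)) ^ (1/2:ℝ)

/-- `sup_{t ∈ [a,b)} ‖u(t)‖_{H^s}`. -/
noncomputable def SupHs (s a b : ℝ) (u : ℝ → FC d) : ℝ≥0∞ :=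
  ⨆ t ∈ Set.Ico a b, HsNorm s (u t)

/-- Assumption (A0): `W` is continuous, its occupation measures are absolutely
continuous, and it is `(ρ,γ)`-irregular:
`⟨ξ⟩^ρ |∫_s^t e^{-i ξ W_r} dr| ≤ C (t-s)^γ`. -/
def Irregular (ρ γ : ℝ) (W : ℝ → ℝ) : Prop :=
  Continuous W ∧
  (∀ a b : ℝ, (volume.restrict (Set.Ioc a b)).map W ≪ volume) ∧
  ∃ C : ℝ, ∀ ξ s t : ℝ, 0 ≤ s → s ≤ t →
    Real.sqrt (1 + ξ ^ 2) ^ ρ *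
      ‖∫ r in s..t, Complex.exp (-(Complex.I * (ξ:ℂ) * (W r : ℂ)))‖ ≤ C * (t - s) ^ γ

/-- The signs `±_j` take values in `{+1, -1}`. -/
def IsSign {m : ℕ} (ε : Fin (m+1) → ℤ) : Prop := ∀ j, ε j = 1 ∨ ε j = -1

/-- Alternating signs `±_j = (-1)^j`. -/
def Alternating {m : ℕ} (ε : Fin (m+1) → ℤ) : Prop := ∀ j : Fin (m+1), ε j = (-1) ^ (j:ℕ)

/-- The hyperplane `Γ^{m+1} = { Σ_j ±_j k_j = 0 }`. -/
def InGamma {m : ℕ} (ε : Fin (m+1) → ℤ) (kk : Fin (m+1) → Freq d) : Prop :=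
  ∑ j, ε j • kk j = 0

/-- `z^+ = z`, `z^- = conj z`. -/
noncomputable def signedVal (e : ℤ) (z : ℂ) : ℂ := if e = 1 then z else (starRingEnd ℂ) z

/-- The multilinear nonlinearity `N(u_1, …, u_m)` built from the multiplier `Nh`
and the signs `ε` (assumption (A2)). -/
noncomputable def NL {d : ℕ} (m : ℕ) (ε : Fin (m+1) → ℤ)
    (Nh : (Fin (m+1) → Freq d) → ℂ) (u : Fin m → FC d) : FC d :=
  fun k0 => ∑' kk : {kk : Fin (m+1) → Freq d // kk 0 = k0 ∧ InGamma ε kk},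
    Nh kk.1 * ∏ j : Fin m, signedVal (ε j.succ) (u j (kk.1 j.succ))

/-- Assumption (A3)_β: `|N̂(k_0,…,k_m)| ≤ C Π_j ⟨k_j⟩^{β_j}` on `Γ^{m+1}`. -/
def SymbolBound {d : ℕ} (m : ℕ) (ε : Fin (m+1) → ℤ)
    (Nh : (Fin (m+1) → Freq d) → ℂ) (β : Fin (m+1) → ℝ) : Prop :=
  ∃ C : ℝ, ∀ kk : Fin (m+1) → Freq d, InGamma ε kk →
    ‖Nh kk‖ ≤ C * ∏ j, jb (kk j) ^ (β j)

/-- Assumption (A4)_α (strong non-resonance): on the support of `N̂` in `Γ^{m+1}`,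
`|Σ_j ±_j φ(k_j)| ≥ c ⟨k_0^*⟩^{α_1} ⟨k_2^*⟩^{α_2}`, stated through any sorting
permutation realizing the decreasing rearrangement of `(|k_0|, …, |k_m|)`. -/
def StronglyNonResonant {d : ℕ} (m : ℕ) (ε : Fin (m+1) → ℤ)
    (Nh : (Fin (m+1) → Freq d) → ℂ) (φ : (Fin d → ℝ) → ℝ) (α₁ α₂ : ℝ) : Prop :=
  ∃ c : ℝ, 0 < c ∧ ∀ kk : Fin (m+1) → Freq d, InGamma ε kk → Nh kk ≠ 0 →
    ∀ σ : Equiv.Perm (Fin (m+1)), (Antitone fun ℓ => freqNorm (kk (σ ℓ))) →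
      c * jb (kk (σ 0)) ^ α₁ * jb (kk (σ 2)) ^ α₂ ≤
        |∑ j, (ε j : ℝ) * φ (fun i => ((kk j i : ℝ)))|

/-- Completely resonant multiplier: supported on the diagonal, with purely
imaginary values there. -/
def CompletelyResonant {d : ℕ} (m : ℕ) (Rh : (Fin (m+1) → Freq d) → ℂ) : Prop :=
  (∀ kk : Fin (m+1) → Freq d, (¬ ∀ j, kk j = kk 0) → Rh kk = 0) ∧
  (∀ kk : Fin (m+1) → Freq d, (Rh kk).re = 0)

/-- `dstar β ℓ = β_{ℓ+1}^*`: the decreasing rearrangement of `(β_1, …, β_m)`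
(extended by `0` out of range). -/
noncomputable def dstar (m : ℕ) (β : Fin (m+1) → ℝ) : ℕ → ℝ :=
  fun i =>
    if h : i < m then
      (fun j : Fin m => β j.succ) (Tuple.sort (fun j : Fin m => β j.succ) (Fin.rev ⟨i, h⟩))
    else 0

/-- Condition (A_ρ)_{α,β,s} on the irregularity exponent `ρ`. -/
def Arho (d m : ℕ) (α₁ α₂ : ℝ) (β : Fin (m+1) → ℝ) (s ρ : ℝ) : Prop :=
  ρ ≥ (β 0 + dstar m β 0) / α₁ ∧
  ρ ≥ (dstar m β 0 + dstar m β 1 - 2 * s) / α₁ ∧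
  (∀ l₀ L : ℕ, 2 ≤ l₀ → l₀ ≤ m → 2 ≤ L → L ≤ l₀ - 1 →
    ρ > (dstar m β 0 + dstar m β 1 - 2 * s +
      ∑ l ∈ Finset.Icc 2 L, (dstar m β l + (d:ℝ)/2 - s)) / (α₁ + α₂)) ∧
  (∀ l₀ L : ℕ, 2 ≤ l₀ → l₀ ≤ m → l₀ + 1 ≤ L → L ≤ m →
    ρ > (dstar m β 0 + dstar m β 1 + β 0 + (d:ℝ)/2 - s +
      ∑ l ∈ Finset.Icc 2 L, (dstar m β l + (d:ℝ)/2 - s)) / (α₁ + α₂))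

/-- Condition (A_ρ*)_{α,β,β_R,s} on the irregularity exponent `ρ`. -/
def ArhoStar (d m : ℕ) (γ α₁ α₂ : ℝ) (β βR : Fin (m+1) → ℝ) (s ν ρ : ℝ) : Prop :=
  ρ ≥ (β 0 + dstar m β 0 + (∑ j, βR j) + (2 - γ) * ν) / α₁ ∧
  ρ ≥ (dstar m β 0 + dstar m β 1 - 2 * s + (1 - γ) * ν) / α₁ ∧
  (∀ l₀ L : ℕ, 2 ≤ l₀ → l₀ ≤ m → 2 ≤ L → L ≤ l₀ - 1 →
    ρ > (dstar m β 0 + dstar m β 1 - 2 * s +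
      (∑ l ∈ Finset.Icc 2 L, (dstar m β l + (d:ℝ)/2 - s)) + (1 - γ) * ν) / (α₁ + α₂)) ∧
  (∀ l₀ L : ℕ, 2 ≤ l₀ → l₀ ≤ m → l₀ + 1 ≤ L → L ≤ m →
    ρ > (dstar m β 0 + dstar m β 1 + β 0 + (∑ j, βR j) - s +
      (∑ l ∈ Finset.Icc 2 L, (dstar m β l + (d:ℝ)/2 - s)) + (2 - γ) * ν) / (α₁ + α₂))

/-- Mild (Duhamel) solution on `[0,T)` of `∂_t u + Ẇ ℒ u + N(u) = 0`:
`u(t) = e^{-(W_t - W_0)ℒ} u_0 - ∫_0^t e^{-(W_t - W_τ)ℒ} N(u(τ)) dτ`. -/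
def IsMildSolution {d : ℕ} (m : ℕ) (ε : Fin (m+1) → ℤ)
    (Nh : (Fin (m+1) → Freq d) → ℂ) (φ : (Fin d → ℝ) → ℝ) (W : ℝ → ℝ)
    (T : ℝ) (u0 : FC d) (u : ℝ → FC d) : Prop :=
  ∀ t ∈ Set.Ico (0:ℝ) T, ∀ k,
    u t k = expL φ (W 0 - W t) u0 k -
      ∫ τ in (0:ℝ)..t, expL φ (W τ - W t) (NL m ε Nh fun _ => u τ) k

/-- `u ∈ C([0,T); H^s(𝕋^d))`. -/
def ContHs {d : ℕ} (s T : ℝ) (u : ℝ → FC d) : Prop :=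
  (∀ t ∈ Set.Ico (0:ℝ) T, HsNorm s (u t) < ⊤) ∧
  ∀ t ∈ Set.Ico (0:ℝ) T, ∀ δ : ℝ, 0 < δ → ∃ η : ℝ, 0 < η ∧
    ∀ t' ∈ Set.Ico (0:ℝ) T, |t' - t| < η →
      HsNorm s (fun k => u t' k - u t k) < ENNReal.ofReal δ

/-! Conjugating by the propagator turns the Duhamel relation into
`e^{W_t ℒ} u(t) = e^{W_c ℒ} u(c) + ∫_c^t e^{W_τ ℒ} f(τ) dτ` on every window `[c, c')`, and this
identity commutes with each Littlewood–Paley projection `P_N`. On a window, the `U²` norm of the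
constant term is at most its `L²` norm (the propagator is unitary) and the `U²` norm of the
integral term is by definition the `DU²` norm of `f`. So the triangle inequality bounds each
dyadic block of `‖u‖_{F^{s,ν}}` by the blocks of `‖u‖_{E^s}` and `‖f‖_{N^{s,ν}}`, and Minkowski's
inequality in weighted `ℓ²` gives the estimate with `C = 1`. -/

theorem _root_.ENNReal.tsum_rpow_add_le {ι : Type*} {p : ℝ} (hp : 1 ≤ p) (f g : ι → ℝ≥0∞) :
    (∑' i, (f i + g i) ^ p) ^ (1 / p) ≤ (∑' i, f i ^ p) ^ (1 / p) + (∑' i, g i ^ p) ^ (1 / p) := by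
  have hp₀ : 0 < p := zero_lt_one.trans_le hp
  rw [one_div, ENNReal.rpow_inv_le_iff hp₀, ENNReal.tsum_eq_iSup_sum]
  refine iSup_le fun S => ?_
  rw [← ENNReal.rpow_inv_le_iff hp₀, ← one_div]
  refine (ENNReal.Lp_add_le S f g hp).trans (add_le_add ?_ ?_) <;>
    exact ENNReal.rpow_le_rpow (ENNReal.sum_le_tsum S) (by positivity)

theorem _root_.ENNReal.tsum_mul_rpow_le_of_le_add {ι : Type*} {p : ℝ} (hp : 1 ≤ p)
    (w x y z : ι → ℝ≥0∞) (h : ∀ i, x i ≤ y i + z i) :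
    (∑' i, w i * x i ^ p) ^ (1 / p) ≤
      (∑' i, w i * y i ^ p) ^ (1 / p) + (∑' i, w i * z i ^ p) ^ (1 / p) := by
  have hp₀ : 0 < p := zero_lt_one.trans_le hp
  have hw : ∀ i (v : ℝ≥0∞), w i * v ^ p = (w i ^ (1 / p) * v) ^ p := fun i v => by
    rw [ENNReal.mul_rpow_of_nonneg _ _ hp₀.le, ← ENNReal.rpow_mul, one_div_mul_cancel hp₀.ne',
      ENNReal.rpow_one]
  simp only [hw]
  calc (∑' i, (w i ^ (1 / p) * x i) ^ p) ^ (1 / p)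
      ≤ (∑' i, (w i ^ (1 / p) * y i + w i ^ (1 / p) * z i) ^ p) ^ (1 / p) := by
        gcongr with i
        rw [← mul_add]
        exact mul_le_mul_right (h i) _
    _ ≤ _ := ENNReal.tsum_rpow_add_le hp _ _

theorem hsNorm_congr_norm (s : ℝ) {u v : FC d} (h : ∀ k, ‖u k‖ = ‖v k‖) :
    HsNorm s u = HsNorm s v := by
  simp only [HsNorm, h]

theorem hsNorm_expL (s : ℝ) (φ : (Fin d → ℝ) → ℝ) (τ : ℝ) (u : FC d) :
    HsNorm s (expL φ τ u) = HsNorm s u :=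
  hsNorm_congr_norm s fun k => by
    rw [expL, norm_mul, mul_assoc, ← Complex.ofReal_mul, Complex.norm_exp_I_mul_ofReal, one_mul]

theorem hsNorm_const_mul (s : ℝ) (z : ℂ) (u : FC d) :
    HsNorm s (fun k => z * u k) = ENNReal.ofReal ‖z‖ * HsNorm s u := by
  have hterm : ∀ k, ENNReal.ofReal (jb k ^ (2 * s) * ‖z * u k‖ ^ 2) =
      ENNReal.ofReal (‖z‖ ^ 2) * ENNReal.ofReal (jb k ^ (2 * s) * ‖u k‖ ^ 2) := fun k => by
    rw [← ENNReal.ofReal_mul (sq_nonneg _), norm_mul]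
    ring_nf
  rw [HsNorm, HsNorm, tsum_congr hterm, ENNReal.tsum_mul_left,
    ENNReal.mul_rpow_of_nonneg _ _ (by norm_num), ENNReal.ofReal_rpow_of_nonneg (sq_nonneg _)
      (by norm_num), ← Real.sqrt_eq_rpow, Real.sqrt_sq (norm_nonneg z)]

theorem isAtom_indicator {s p a b : ℝ} (hab : a ≤ b) {ψ : FC d} (hψ : HsNorm s ψ ^ p ≤ 1) :
    IsAtom s p a b (fun x k => if a ≤ x ∧ x < b then ψ k else 0) := by
  -- `congr` closes the goal because the two `if`s differ only in their `Decidable` instances.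
  refine ⟨1, ![a, b], fun _ => ψ, ?_, rfl, rfl, by simpa using hψ, fun x k => by
    simp only [Fin.sum_univ_one]; congr⟩
  intro i j hij
  fin_cases i <;> fin_cases j <;> simp_all

theorem upNorm_le_of_hasSum {s p a b : ℝ} {u : ℝ → FC d} (c : ℕ → ℂ) (A : ℕ → ℝ → FC d)
    (hc : Summable fun n => ‖c n‖) (hA : ∀ n, IsAtom s p a b (A n))
    (hu : ∀ t ∈ Set.Ico a b, ∀ j, HasSum (fun n => c n * A n t j) (u t j)) :
    UpNorm s p a b u ≤ ENNReal.ofReal (∑' n, ‖c n‖) :=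
  iInf₂_le_of_le c A <| iInf₂_le_of_le hc hA <| iInf_le_of_le hu le_rfl

theorem upNorm_le_of_eq_mul_atom {s p a b : ℝ} {u A : ℝ → FC d} (z : ℂ)
    (hA : IsAtom s p a b A) (hu : ∀ t ∈ Set.Ico a b, ∀ j, u t j = z * A t j) :
    UpNorm s p a b u ≤ ENNReal.ofReal ‖z‖ := by
  have hnorm : HasSum (fun n : ℕ => ‖if n = 0 then z else 0‖) ‖z‖ := by
    simpa [apply_ite] using hasSum_ite_eq 0 ‖z‖
  refine (upNorm_le_of_hasSum _ (fun _ => A) hnorm.summable (fun _ => hA)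
    fun t ht j => ?_).trans_eq (by rw [hnorm.tsum_eq])
  simpa [hu t ht j, ite_mul] using hasSum_ite_eq 0 (z * A t j)

theorem upNorm_const_le {s p a b : ℝ} (hp : 0 ≤ p) (hab : a ≤ b) {u : ℝ → FC d} {ψ : FC d}
    (hu : ∀ t ∈ Set.Ico a b, u t = ψ) : UpNorm s p a b u ≤ HsNorm s ψ := by
  by_cases htop : HsNorm s ψ = ⊤
  · simp [htop]
  -- Normalising by `‖ψ‖ + ε` instead of `‖ψ‖` avoids a separate case `‖ψ‖ = 0`.
  refine ENNReal.le_of_forall_pos_le_add fun ε hε _ => ?_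
  set r : ℝ := (HsNorm s ψ).toReal + ε
  have hr : 0 < r := by positivity
  have hA : HsNorm s (fun k => ((r⁻¹ : ℝ) : ℂ) * ψ k) ^ p ≤ 1 := by
    refine ENNReal.rpow_le_one ?_ hp
    rw [hsNorm_const_mul, Complex.norm_real, Real.norm_of_nonneg (by positivity),
      ← ENNReal.ofReal_toReal htop, ← ENNReal.ofReal_mul (by positivity)]
    refine ENNReal.ofReal_le_one.2 ((inv_mul_le_one₀ hr).2 ?_)
    simp [r]
  refine (upNorm_le_of_eq_mul_atom (r : ℂ) (isAtom_indicator hab hA) fun t ht j => ?_).trans ?_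
  · simp [hu t ht, ht.1, ht.2, ← mul_assoc, mul_inv_cancel₀ (Complex.ofReal_ne_zero.2 hr.ne')]
  · rw [Complex.norm_real, Real.norm_of_nonneg hr.le]
    exact (ENNReal.ofReal_add ENNReal.toReal_nonneg hε.le).trans_le
      (by simp [ENNReal.ofReal_toReal htop])

theorem upNorm_add_le {s p a b : ℝ} {u v w : ℝ → FC d}
    (h : ∀ t ∈ Set.Ico a b, ∀ j, w t j = u t j + v t j) :
    UpNorm s p a b w ≤ UpNorm s p a b u + UpNorm s p a b v := by
  simp only [UpNorm, ENNReal.iInf_add, ENNReal.add_iInf]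
  refine le_iInf₂ fun c₂ A₂ => le_iInf₂ fun hc₂ hA₂ => le_iInf fun hv => le_iInf₂ fun c₁ A₁ =>
    le_iInf₂ fun hc₁ hA₁ => le_iInf fun hu => ?_
  let e := Equiv.natSumNatEquivNat.symm
  have hnorm : HasSum (fun n => ‖Sum.elim c₁ c₂ (e n)‖) ((∑' n, ‖c₁ n‖) + ∑' n, ‖c₂ n‖) :=
    (e.hasSum_iff (f := fun x => ‖Sum.elim c₁ c₂ x‖)).2 (hc₁.hasSum.sum hc₂.hasSum)
  refine (upNorm_le_of_hasSum (fun n => Sum.elim c₁ c₂ (e n)) (fun n => Sum.elim A₁ A₂ (e n))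
    hnorm.summable (fun n => ?_) fun t ht j => ?_).trans_eq ?_
  · cases e n with
    | inl n => exact hA₁ n
    | inr n => exact hA₂ n
  · rw [h t ht j]
    exact (e.hasSum_iff (f := fun x => Sum.elim c₁ c₂ x * Sum.elim A₁ A₂ x t j)).2
      ((hu t ht j).sum (hv t ht j))
  · rw [hnorm.tsum_eq, ENNReal.ofReal_add (tsum_nonneg fun _ => norm_nonneg _)
      (tsum_nonneg fun _ => norm_nonneg _)]

def IsDuhamelSolution (φ : (Fin d → ℝ) → ℝ) (W : ℝ → ℝ) (a b : ℝ) (f u : ℝ → FC d) : Prop :=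
  ∀ t ∈ Set.Ico a b, ∀ k,
    u t k = expL φ (W a - W t) (u a) k + ∫ τ in a..t, expL φ (W τ - W t) (f τ) k

theorem expL_expL_apply (φ : (Fin d → ℝ) → ℝ) (σ τ : ℝ) (u : FC d) (k : Freq d) :
    expL φ σ (expL φ τ u) k = expL φ (σ + τ) u k := by
  simp only [expL, ← mul_assoc, ← Complex.exp_add]
  push_cast
  ring_nf

theorem intervalIntegrable_expL {W : ℝ → ℝ} (hW : Continuous W) (φ : (Fin d → ℝ) → ℝ)
    {f : ℝ → FC d} {a b : ℝ} {k : Freq d} (hf : IntervalIntegrable (fun t => f t k) volume a b) :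
    IntervalIntegrable (fun t => expL φ (W t) (f t) k) volume a b :=
  hf.continuousOn_mul (by fun_prop)

namespace IsDuhamelSolution

variable {φ : (Fin d → ℝ) → ℝ} {W : ℝ → ℝ} {a b : ℝ} {f u : ℝ → FC d}

theorem comp_PN (hu : IsDuhamelSolution φ W a b f u) (n : ℕ) :
    IsDuhamelSolution φ W a b (fun t => PN n (f t)) (fun t => PN n (u t)) := by
  intro t ht k
  simp only [PN, expL]
  split_ifs
  · exact hu t ht k
  · simp

theorem expL_apply (hu : IsDuhamelSolution φ W a b f u) {t : ℝ} (ht : t ∈ Set.Ico a b)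
    (k : Freq d) :
    expL φ (W t) (u t) k = expL φ (W a) (u a) k + ∫ τ in a..t, expL φ (W τ) (f τ) k := by
  have hmul : ∀ (σ τ : ℝ) (v : FC d), Complex.exp (Complex.I * (σ : ℂ) * (φ fun i => (k i : ℝ)))
      * expL φ τ v k = expL φ (σ + τ) v k := fun σ τ v => expL_expL_apply φ σ τ v k
  rw [expL, hu t ht k, mul_add, hmul, ← intervalIntegral.integral_const_mul]
  simp only [hmul, add_sub_cancel]

theorem expL_apply_eq_add_integral (hu : IsDuhamelSolution φ W a b f u) (hW : Continuous W)
    (hf : ∀ k, IntervalIntegrable (fun t => f t k) volume a b) {c t : ℝ}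
    (hc : c ∈ Set.Ico a b) (ht : t ∈ Set.Ico a b) (k : Freq d) :
    expL φ (W t) (u t) k = expL φ (W c) (u c) k + ∫ τ in c..t, expL φ (W τ) (f τ) k := by
  have hint := intervalIntegrable_expL hW φ (hf k)
  have hsub : ∀ x ∈ Set.Ico a b, x ∈ Set.uIcc a b := fun x hx =>
    Set.Icc_subset_uIcc (Set.Ico_subset_Icc_self hx)
  rw [hu.expL_apply ht, hu.expL_apply hc, add_assoc,
    intervalIntegral.integral_add_adjacent_intervals
      (hint.mono_set (Set.uIcc_subset_uIcc Set.left_mem_uIcc (hsub c hc)))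
      (hint.mono_set (Set.uIcc_subset_uIcc (hsub c hc) (hsub t ht)))]

end IsDuhamelSolution

theorem upWNorm_le_l2Norm_add_duWNorm {φ : (Fin d → ℝ) → ℝ} {W : ℝ → ℝ} {c c' : ℝ}
    (hc : c ≤ c') {f u : ℝ → FC d}
    (hu : ∀ t ∈ Set.Ico c c', ∀ k,
      expL φ (W t) (u t) k = expL φ (W c) (u c) k + ∫ τ in c..t, expL φ (W τ) (f τ) k) :
    UpWNorm 0 2 φ W c c' u ≤ L2Norm (u c) + DUWNorm φ W c c' f :=
  (upNorm_add_le hu).trans <| add_le_add_left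
    ((upNorm_const_le zero_le_two hc fun _ _ => rfl).trans_eq (hsNorm_expL 0 φ (W c) (u c))) _

theorem IsDuhamelSolution.iSup_upWNorm_PN_le {φ : (Fin d → ℝ) → ℝ} {W : ℝ → ℝ} {a b : ℝ}
    {f u : ℝ → FC d} (hu : IsDuhamelSolution φ W a b f u) (hW : Continuous W)
    (hf : ∀ k, IntervalIntegrable (fun t => f t k) volume a b) (n : ℕ) {δ : ℝ} (hδ : 0 < δ) :
    (⨆ (c : ℝ) (_ : a ≤ c) (_ : c + δ ≤ b),
        UpWNorm 0 2 φ W c (c + δ) fun t => PN n (u t)) ≤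
      (⨆ t ∈ Set.Ico a b, L2Norm (PN n (u t))) +
        ⨆ (c : ℝ) (_ : a ≤ c) (_ : c + δ ≤ b), DUWNorm φ W c (c + δ) fun t => PN n (f t) := by
  refine iSup₂_le fun c hac => iSup_le fun hcb => ?_
  have hc : c ∈ Set.Ico a b := ⟨hac, by linarith⟩
  have hfPN : ∀ k, IntervalIntegrable (fun t => PN n (f t) k) volume a b := fun k => by
    simp only [PN]
    split_ifs
    exacts [hf k, intervalIntegrable_const]
  have hmod : ∀ t ∈ Set.Ico c (c + δ), ∀ k, expL φ (W t) (PN n (u t)) k =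
      expL φ (W c) (PN n (u c)) k + ∫ τ in c..t, expL φ (W τ) (PN n (f τ)) k := fun t ht =>
    (hu.comp_PN n).expL_apply_eq_add_integral hW hfPN hc ⟨hac.trans ht.1, by linarith [ht.2]⟩
  exact (upWNorm_le_l2Norm_add_duWNorm (by linarith) hmod).trans <|
    add_le_add (le_biSup (fun t => L2Norm (PN n (u t))) hc)
      (le_iSup₂_of_le c hac (le_iSup_of_le hcb le_rfl))

theorem linear_shorttime_estimate_general
    (d : ℕ)
    (W : ℝ → ℝ) (hW : Continuous W)
    (φ : (Fin d → ℝ) → ℝ)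
    (s ν : ℝ) :
    ∃ C : ℝ, 0 ≤ C ∧ ∀ a b : ℝ, a < b → ∀ f u : ℝ → FC d,
      (∀ k, IntervalIntegrable (fun t => f t k) volume a b) →
      (∀ t ∈ Set.Ico a b, ∀ k,
        u t k = expL φ (W a - W t) (u a) k +
          ∫ τ in a..t, expL φ (W τ - W t) (f τ) k) →
      FNorm s ν φ W a b u ≤
        ENNReal.ofReal C * (ENorm s a b u + NNorm s ν φ W a b f) := by
  refine ⟨1, zero_le_one, fun a b hab f u hf hu => ?_⟩
  rw [ENNReal.ofReal_one, one_mul]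
  have hδ : ∀ n : ℕ, 0 < min (((2 : ℝ) ^ n) ^ (-ν)) (b - a) := fun n =>
    lt_min (by positivity) (sub_pos.2 hab)
  exact ENNReal.tsum_mul_rpow_le_of_le_add one_le_two _ _ _ _ fun n =>
    IsDuhamelSolution.iSup_upWNorm_PN_le hu hW hf n (hδ n)

/-- **Linear short-time estimate:** if `u` solves `∂_t u + Ẇ ℒ u = f` (in the
Duhamel sense) on a bounded interval `I = [a,b)`, then
`‖u‖_{F^{s,ν}(I)} ≤ C (‖u‖_{E^s(I)} + ‖f‖_{N^{s,ν}(I)})`. -/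
theorem linear_shorttime_estimate
    (d : ℕ) (hd : 1 ≤ d)
    (W : ℝ → ℝ) (hW : Continuous W)
    (φ : (Fin d → ℝ) → ℝ) (hφ : Continuous φ)
    (s ν : ℝ) (hν : 0 < ν) :
    ∃ C : ℝ, 0 ≤ C ∧ ∀ a b : ℝ, a < b → ∀ f u : ℝ → FC d,
      (∀ k, IntervalIntegrable (fun t => f t k) volume a b) →
      (∀ t ∈ Set.Ico a b, ∀ k,
        u t k = expL φ (W a - W t) (u a) k +
          ∫ τ in a..t, expL φ (W τ - W t) (f τ) k) →
      FNorm s ν φ W a b u ≤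
        ENNReal.ofReal C * (ENorm s a b u + NNorm s ν φ W a b f) :=
  linear_shorttime_estimate_general d W hW φ s ν

end Modulated
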